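/- For real parameters γ, b₂, g₀, define H_NNN(k_y) = (γ + cos k_y)σ₃ + (sin k_y + b₂ sin 2k_y)σ₁ + (b₂ cos 2k_y)σ₂, H_L(k_y) = (γ + cos k_y)σ₁⊗σ₀ + (sin k_y + b₂ sin 2k_y)σ₃⊗σ₁ + (b₂ cos 2k_y)σ₃⊗σ₂, H′_SSH(k_x) = (γ + 1 − g₀ + cos k_x)σ₂ + (sin k_x)σ₃, and H_II(k_x, k_y) = H_L(k_y) + σ₂ ⊗ H′_SSH(k_x). Let Q be the 4×4 matrix whose columns are u₊⊗e₁, u₋⊗e₂, u₊⊗e₂, u₋⊗e₁, where u_± = (1, ±1)ᵀ/√2 and e₁ = (1,0)ᵀ, e₂ = (0,1)ᵀ. Then Q is unitary, its columns are eigenvectors of σ₁⊗σ₃ with eigenvalues (+1, +1, −1, −1), and for every real k_y, Qᴴ H_II(π, k_y) Q = fromBlocks(H_NNN(k_y) + t₀σ₁, 0, 0, σ₃ H_NNN(−k_y) σ₃ − t₀σ₁) with t₀ = γ − g₀. -/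
import Mathlib


open Matrix
open scoped Kronecker

noncomputable section

/-- Pauli matrix `σ₀` (the 2×2 identity). -/
def σ0 : Matrix (Fin 2) (Fin 2) ℂ := 1
/-- Pauli matrix `σ₁`. -/
def σ1 : Matrix (Fin 2) (Fin 2) ℂ := !![0, 1; 1, 0]
/-- Pauli matrix `σ₂`. -/
def σ2 : Matrix (Fin 2) (Fin 2) ℂ := !![0, -Complex.I; Complex.I, 0]
/-- Pauli matrix `σ₃`. -/
def σ3 : Matrix (Fin 2) (Fin 2) ℂ := !![1, 0; 0, -1]

/-- `H_NNN(k_y) = (γ + cos k_y)σ₃ + (sin k_y + b₂ sin 2k_y)σ₁ + (b₂ cos 2k_y)σ₂`. -/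
def HNNN (γ b2 ky : ℝ) : Matrix (Fin 2) (Fin 2) ℂ :=
  ((γ + Real.cos ky : ℝ) : ℂ) • σ3 +
    ((Real.sin ky + b2 * Real.sin (2 * ky) : ℝ) : ℂ) • σ1 +
    ((b2 * Real.cos (2 * ky) : ℝ) : ℂ) • σ2

/-- `H_L(k_y) = (γ + cos k_y)σ₁⊗σ₀ + (sin k_y + b₂ sin 2k_y)σ₃⊗σ₁ + (b₂ cos 2k_y)σ₃⊗σ₂`. -/
def HL (γ b2 ky : ℝ) : Matrix (Fin 2 × Fin 2) (Fin 2 × Fin 2) ℂ :=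
  ((γ + Real.cos ky : ℝ) : ℂ) • (σ1 ⊗ₖ σ0) +
    ((Real.sin ky + b2 * Real.sin (2 * ky) : ℝ) : ℂ) • (σ3 ⊗ₖ σ1) +
    ((b2 * Real.cos (2 * ky) : ℝ) : ℂ) • (σ3 ⊗ₖ σ2)

/-- `H′_SSH(k_x) = (γ + 1 - g₀ + cos k_x)σ₂ + (sin k_x)σ₃` (the transformed SSH
model with `t_x = 1`). -/
def HSSH' (γ g0 kx : ℝ) : Matrix (Fin 2) (Fin 2) ℂ :=
  ((γ + 1 - g0 + Real.cos kx : ℝ) : ℂ) • σ2 + ((Real.sin kx : ℝ) : ℂ) • σ3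

/-- The simplified type-II quadrupole model `H_II(k_x, k_y) = H_L(k_y) + σ₂ ⊗ H′_SSH(k_x)`. -/
def HII (γ b2 g0 kx ky : ℝ) : Matrix (Fin 2 × Fin 2) (Fin 2 × Fin 2) ℂ :=
  HL γ b2 ky + σ2 ⊗ₖ HSSH' γ g0 kx

/-- `u₊ = (1, 1)ᵀ/√2`. -/
def uplus : Fin 2 → ℂ := ![((Real.sqrt 2 : ℝ) : ℂ)⁻¹, ((Real.sqrt 2 : ℝ) : ℂ)⁻¹]
/-- `u₋ = (1, -1)ᵀ/√2`. -/
def uminus : Fin 2 → ℂ := ![((Real.sqrt 2 : ℝ) : ℂ)⁻¹, -((Real.sqrt 2 : ℝ) : ℂ)⁻¹]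
/-- `e₁ = (1, 0)ᵀ`. -/
def e1 : Fin 2 → ℂ := ![1, 0]
/-- `e₂ = (0, 1)ᵀ`. -/
def e2 : Fin 2 → ℂ := ![0, 1]

/-- The matrix `Q` whose columns are `u₊⊗e₁, u₋⊗e₂, u₊⊗e₂, u₋⊗e₁`. -/
def Qmat : Matrix (Fin 2 × Fin 2) (Fin 4) ℂ :=
  Matrix.of fun p j =>
    (![fun p : Fin 2 × Fin 2 => uplus p.1 * e1 p.2,
       fun p : Fin 2 × Fin 2 => uminus p.1 * e2 p.2,
       fun p : Fin 2 × Fin 2 => uplus p.1 * e2 p.2,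
       fun p : Fin 2 × Fin 2 => uminus p.1 * e1 p.2] j) p

lemma sqrt2_sq : ((Real.sqrt 2 : ℝ) : ℂ) * ((Real.sqrt 2 : ℝ) : ℂ) = 2 := by
  rw [← Complex.ofReal_mul, Real.mul_self_sqrt (by norm_num)]
  norm_num

lemma inv_sqrt2_sq : ((Real.sqrt 2 : ℝ) : ℂ)⁻¹ * ((Real.sqrt 2 : ℝ) : ℂ)⁻¹ = 2⁻¹ := by
  rw [← mul_inv, sqrt2_sq]

set_option maxHeartbeats 2000000 in
/-- `Q` is unitary, its columns are eigenvectors of `σ₁⊗σ₃` with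
eigenvalues `(+1, +1, -1, -1)`, and `Qᴴ H_II(π, k_y) Q` is the block matrix
`fromBlocks(H_NNN(k_y) + t₀σ₁, 0, 0, σ₃ H_NNN(-k_y) σ₃ - t₀σ₁)` with `t₀ = γ - g₀`. -/
theorem type_II_QTI_stmt15 (γ b2 g0 : ℝ) :
    Qmatᴴ * Qmat = 1 ∧
    (∀ j : Fin 4, (σ1 ⊗ₖ σ3).mulVec (fun p => Qmat p j) =
      ((![1, 1, -1, -1] : Fin 4 → ℂ) j) • fun p => Qmat p j) ∧
    ∀ ky : ℝ,
      Qmatᴴ * HII γ b2 g0 Real.pi ky * Qmat =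
        (Matrix.fromBlocks
            (HNNN γ b2 ky + ((γ - g0 : ℝ) : ℂ) • σ1) 0 0
            (σ3 * HNNN γ b2 (-ky) * σ3 - ((γ - g0 : ℝ) : ℂ) • σ1)).submatrix
          finSumFinEquiv.symm finSumFinEquiv.symm := by
  have h1 : Qmatᴴ * Qmat = 1 := by
    ext i j
    fin_cases i <;> fin_cases j <;>
      simp [Qmat, uplus, uminus, e1, e2, Matrix.mul_apply, Fin.sum_univ_succ,
        Fintype.sum_prod_type, Matrix.conjTranspose_apply, Matrix.one_apply,
        map_inv₀, Complex.conj_ofReal] <;> ring_nf <;>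
      simp [sq, inv_sqrt2_sq]
  refine ⟨h1, ?_, ?_⟩
  · intro j
    funext p
    fin_cases j <;> obtain ⟨a, b⟩ := p <;> fin_cases a <;> fin_cases b <;>
      simp [Qmat, uplus, uminus, e1, e2, σ1, σ3, Matrix.mulVec, Matrix.kroneckerMap_apply,
        dotProduct, Fin.sum_univ_succ, Fintype.sum_prod_type]
  · intro ky
    set D := (Matrix.fromBlocks
            (HNNN γ b2 ky + ((γ - g0 : ℝ) : ℂ) • σ1) 0 0
            (σ3 * HNNN γ b2 (-ky) * σ3 - ((γ - g0 : ℝ) : ℂ) • σ1)).submatrix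
          finSumFinEquiv.symm finSumFinEquiv.symm with hD
    have key : HII γ b2 g0 Real.pi ky * Qmat = Qmat * D := by
      have e0 : (finSumFinEquiv.symm (0 : Fin 4) : Fin 2 ⊕ Fin 2) = Sum.inl 0 := by decide
      have e1' : (finSumFinEquiv.symm (1 : Fin 4) : Fin 2 ⊕ Fin 2) = Sum.inl 1 := by decide
      have e2' : (finSumFinEquiv.symm (2 : Fin 4) : Fin 2 ⊕ Fin 2) = Sum.inr 0 := by decide
      have e3 : (finSumFinEquiv.symm (3 : Fin 4) : Fin 2 ⊕ Fin 2) = Sum.inr 1 := by decide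
      ext p j
      fin_cases j <;> obtain ⟨a, b⟩ := p <;> fin_cases a <;> fin_cases b <;>
        simp [hD, HII, HL, HSSH', HNNN, Qmat, uplus, uminus, e1, e2, σ0, σ1, σ2, σ3,
          Matrix.mul_apply, Fin.sum_univ_four, Fin.sum_univ_two, Fintype.sum_prod_type,
          Matrix.fromBlocks, Matrix.submatrix_apply, Matrix.one_apply, e0, e1', e2', e3,
          Real.cos_pi, Real.sin_pi, Real.cos_neg, Real.sin_neg, mul_neg, neg_mul] <;>
        ring_nf <;>
        try (simp [Real.sin_neg, Real.cos_neg, Complex.ext_iff] <;> ring_nf) <;>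
        try exact ⟨trivial, trivial⟩
    calc Qmatᴴ * HII γ b2 g0 Real.pi ky * Qmat
        = Qmatᴴ * (HII γ b2 g0 Real.pi ky * Qmat) := by rw [Matrix.mul_assoc]
      _ = Qmatᴴ * (Qmat * D) := by rw [key]
      _ = (Qmatᴴ * Qmat) * D := by rw [Matrix.mul_assoc]
      _ = D := by rw [h1, Matrix.one_mul]


end
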